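/- Let V be a nonempty doubled word and let q ≥ 2 be an integer. Then there exist constants c, C > 0 and N such that for all n ≥ N: c/n ≤ δ_n(V,q) ≤ C·(log n)/n. -/

import Mathlib

open Filter

/-- `U` is an instance of `V`: image of `V` under a nonerasing substitution. -/
def IsInstance {Γ β : Type*} (V : List Γ) (U : List β) : Prop :=
  ∃ φ : Γ → List β, (∀ x ∈ V, φ x ≠ []) ∧ U = (V.map φ).flatten

/-- `W` encounters `V`: some factor of `W` is an instance of `V`. -/
def Encounters {Γ β : Type*} (V : List Γ) (W : List β) : Prop :=
  ∃ U : List β, U <:+: W ∧ IsInstance V U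

/-- Zimin words over alphabet ℕ. -/
def Zimin : ℕ → List ℕ
  | 0 => []
  | n + 1 => Zimin n ++ [n] ++ Zimin n

/-- Least M such that every q-ary word of length M encounters Z_n. -/
noncomputable def fZ (n q : ℕ) : ℕ :=
  sInf {M | ∀ W : List (Fin q), W.length = M → Encounters (Zimin n) W}

/-- Exponential tower with b copies of a. -/
def tower (a : ℕ) : ℕ → ℕ
  | 0 => 1
  | b + 1 => a ^ tower a b

/-- Number of length-M q-ary words that are instances of V. -/
noncomputable def instCount (V : List ℕ) (q M : ℕ) : ℕ :=
  Nat.card {W : Fin M → Fin q // IsInstance V (List.ofFn W)}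

/-- Factor density d(V,W). -/
noncomputable def factorDensity {α : Type*} [DecidableEq α] (V W : List α) : ℝ :=
  (((((Finset.range (W.length + 1)) ×ˢ (Finset.range (W.length + 1))).filter
      (fun p => p.1 < p.2 ∧ (W.drop p.1).take (p.2 - p.1) = V)).card : ℝ)) /
    ((W.length : ℝ) + 1 - (V.length : ℝ))

/-- Number of substrings of W (given by position pairs) that are V-instances. -/
noncomputable def instSubCount {Γ β : Type*} (V : List Γ) (W : List β) : ℕ :=
  Nat.card {p : ℕ × ℕ //
    p.1 < p.2 ∧ p.2 ≤ W.length ∧ IsInstance V ((W.drop p.1).take (p.2 - p.1))}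

/-- Instance density δ(V,W). -/
noncomputable def instDensity {Γ β : Type*} (V : List Γ) (W : List β) : ℝ :=
  (instSubCount V W : ℝ) / ((W.length + 1).choose 2 : ℝ)

/-- q-liminf density of V. -/
noncomputable def liminfDensity {Γ : Type*} (V : List Γ) (q : ℕ) : ℝ :=
  Filter.liminf (fun W : List (Fin q) => instDensity V W) (Filter.comap List.length Filter.atTop)

/-- Expected instance density of V in a uniformly random q-ary word of length n. -/
noncomputable def expDensity {Γ : Type*} (V : List Γ) (q n : ℕ) : ℝ :=
  (∑ W : Fin n → Fin q, instDensity V (List.ofFn W)) / (q : ℝ) ^ n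

/-- Variance of the instance density of V in a uniformly random q-ary word of length n. -/
noncomputable def varDensity {Γ : Type*} (V : List Γ) (q n : ℕ) : ℝ :=
  (∑ W : Fin n → Fin q, (instDensity V (List.ofFn W) - expDensity V q n) ^ 2) / (q : ℝ) ^ n

/-- Probability that a uniformly random q-ary word of length n is a V-instance. -/
noncomputable def instProb {Γ : Type*} (V : List Γ) (q n : ℕ) : ℝ :=
  (Nat.card {W : Fin n → Fin q // IsInstance V (List.ofFn W)} : ℝ) / (q : ℝ) ^ n

/-- V is doubled: every letter occurring in V occurs at least twice. -/
def Doubled {Γ : Type*} [DecidableEq Γ] (V : List Γ) : Prop :=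
  ∀ x ∈ V, 2 ≤ V.count x

/-- Number of letter recurrences ‖V‖ = |V| - |L(V)|. -/
def recurCount {Γ : Type*} [DecidableEq Γ] (V : List Γ) : ℕ :=
  V.length - V.dedup.length

/-!
Splitting factors by length `m` and starting position, linearity of expectation gives
`δ_n(V,q) = ∑_{m=1}^n (n + 1 - m) p_m / binom(n+1, 2)`, where `p_m` is the probability that a
uniformly random word of length `m` is an instance of `V`. A constant word of length `|V|` is an
instance, so `p_{|V|} ≥ q^{-|V|}`, and the single term `m = |V|` already gives `δ_n ≥ c / n`.
If `V` is doubled, an instance of length `m` is determined by the lengths of the images of the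
`k` distinct letters together with the concatenation of these images, a word of length at most
`m / 2`. Hence `p_m ≤ (m + 1)^k q^{-m/2}`, which is summable, and `δ_n = O(1/n)`.
-/

open Finset

section Windows

variable {α : Type*}

theorem take_drop_ofFn_append {i m k : ℕ} (a : Fin i → α) (u : Fin m → α) (b : Fin k → α) :
    ((List.ofFn (Fin.append (Fin.append a u) b)).drop i).take m = List.ofFn u := by
  simp [List.ofFn_fin_append]

theorem card_filter_take_drop_ofFn [Fintype α] (P : List α → Prop) [DecidablePred P]
    {n i m : ℕ} (h : i + m ≤ n) :
    #{W : Fin n → α | P (((List.ofFn W).drop i).take m)}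
      = #{u : Fin m → α | P (List.ofFn u)} * Fintype.card α ^ (n - m) := by
  obtain ⟨k, rfl⟩ := Nat.exists_eq_add_of_le h
  let e := ((Fin.appendEquiv i m).prodCongr (Equiv.refl (Fin k → α))).trans
    (Fin.appendEquiv (i + m) k)
  set g : (Fin m → α) → ℕ := fun u => if P (List.ofFn u) then 1 else 0
  rw [card_filter, card_filter, ← Fintype.sum_equiv e (fun t => g t.1.2) _
    (fun t => by simp [g, e, Fin.appendEquiv, List.ofFn_fin_append])]
  simp only [Fintype.sum_prod_type, sum_const, card_univ, Fintype.card_fun, Fintype.card_fin,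
    smul_eq_mul, ← mul_sum]
  rw [show i + m + k - m = i + k by omega, pow_add]
  ring

end Windows

open Classical in
theorem instSubCount_eq_sum {Γ β : Type*} (V : List Γ) (W : List β) :
    instSubCount V W = ∑ m ∈ Icc 1 W.length,
      #{i ∈ range (W.length + 1 - m) | IsInstance V ((W.drop i).take m)} := by
  rw [← card_sigma, instSubCount, ← Nat.card_eq_finsetCard]
  refine Nat.card_congr
    { toFun := fun p => ⟨⟨p.1.2 - p.1.1, p.1.1⟩, ?_⟩
      invFun := fun x => ⟨(x.1.2, x.1.2 + x.1.1), ?_⟩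
      left_inv := ?_
      right_inv := ?_ }
  · obtain ⟨⟨i, j⟩, hij, hj, hinst⟩ := p
    simp only [mem_sigma, mem_Icc, mem_filter, mem_range]
    exact ⟨by omega, by omega, hinst⟩
  · obtain ⟨⟨m, i⟩, hx⟩ := x
    simp only [mem_sigma, mem_Icc, mem_filter, mem_range] at hx ⊢
    exact ⟨by omega, by omega, by simpa using hx.2.2⟩
  · rintro ⟨⟨i, j⟩, hij, -⟩
    ext <;> simp
    omega
  · rintro ⟨⟨m, i⟩, -⟩
    simp

theorem sum_instSubCount_ofFn {Γ α : Type*} [Fintype α] (V : List Γ) (n : ℕ) :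
    ∑ W : Fin n → α, instSubCount V (List.ofFn W) = ∑ m ∈ Icc 1 n, (n + 1 - m) *
      Nat.card {u : Fin m → α // IsInstance V (List.ofFn u)} * Fintype.card α ^ (n - m) := by
  classical
  simp only [instSubCount_eq_sum, List.length_ofFn]
  rw [sum_comm]
  refine sum_congr rfl fun m hm => ?_
  simp only [card_filter]
  rw [sum_comm]
  simp only [← card_filter]
  rw [sum_congr rfl fun i hi => card_filter_take_drop_ofFn (fun w => IsInstance V w)
    (by rw [mem_range] at hi; rw [mem_Icc] at hm; omega)]
  rw [sum_const, card_range, smul_eq_mul, Nat.card_eq_fintype_card, Fintype.card_subtype,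
    mul_assoc]

theorem expDensity_eq_sum_instProb {Γ : Type*} (V : List Γ) {q : ℕ} (hq : 0 < q) (n : ℕ) :
    expDensity V q n =
      (∑ m ∈ Icc 1 n, ((n + 1 - m : ℕ) : ℝ) * instProb V q m) / (((n : ℝ) + 1) * n / 2) := by
  have hsum := congrArg (Nat.cast (R := ℝ)) (sum_instSubCount_ofFn (α := Fin q) V n)
  push_cast at hsum
  have hq' : (q : ℝ) ≠ 0 := by positivity
  simp only [expDensity, instDensity, List.length_ofFn, ← sum_div, hsum, Fintype.card_fin,
    Nat.cast_choose_two]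
  push_cast
  rw [add_sub_cancel_right, div_right_comm, sum_div]
  congr 1
  refine sum_congr rfl fun m hm => ?_
  rw [mem_Icc] at hm
  rw [instProb, pow_sub₀ _ hq' hm.2]
  field_simp

section Substitution

variable {Γ α : Type*} {V : List Γ}

theorem length_le_length_flatten_map {x : Γ} (hx : x ∈ V) (φ : Γ → List α) :
    (φ x).length ≤ ((V.map φ).flatten).length := by
  rw [List.length_flatten]
  exact List.le_sum_of_mem (List.mem_map.2 ⟨φ x, List.mem_map_of_mem hx, rfl⟩)

theorem Doubled.two_mul_length_flatten_map_dedup_le [DecidableEq Γ] (hd : Doubled V)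
    (φ : Γ → List α) :
    2 * ((V.dedup.map φ).flatten).length ≤ ((V.map φ).flatten).length := by
  have hdedup : (V.dedup.map fun x => (φ x).length).sum = ∑ x ∈ V.toFinset, (φ x).length := by
    rw [← List.sum_toFinset _ V.nodup_dedup]
    congr 1
    ext
    simp
  rw [List.length_flatten, List.length_flatten, List.map_map, List.map_map, Function.comp_def,
    hdedup, Finset.sum_list_map_count, mul_sum]
  exact sum_le_sum fun x hx => Nat.mul_le_mul_right _ (hd x (List.mem_toFinset.1 hx))

theorem flatten_map_eq_of_flatten_map_dedup_eq [DecidableEq Γ] {φ₁ φ₂ : Γ → List α}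
    (hlen : ∀ x ∈ V, (φ₁ x).length = (φ₂ x).length)
    (h : (V.dedup.map φ₁).flatten = (V.dedup.map φ₂).flatten) :
    (V.map φ₁).flatten = (V.map φ₂).flatten := by
  have hmap : V.dedup.map φ₁ = V.dedup.map φ₂ := by
    refine List.eq_iff_flatten_eq.2 ⟨h, ?_⟩
    simp only [List.map_map]
    exact List.map_congr_left fun x hx => hlen x (List.mem_dedup.1 hx)
  rw [List.map_congr_left fun x hx => List.map_inj_left.1 hmap x (List.mem_dedup.2 hx)]

end Substitution

section InstanceCount

variable {Γ α : Type*} [DecidableEq Γ] {V : List Γ}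

/-- When `(V.map φ).flatten` has length `m` the `min` is inactive, and for doubled `V` the
concatenation of the images of the distinct letters has length at most `m / 2`; it is padded
with an arbitrary letter. -/
noncomputable def instanceCode [Nonempty α] (V : List Γ) (m : ℕ) (φ : Γ → List α) :
    (V.toFinset → Fin (m + 1)) × (Fin (m / 2) → α) :=
  (fun x => ⟨min (φ x).length m, Nat.lt_succ_of_le (min_le_right _ _)⟩,
    fun t => ((V.dedup.map φ).flatten).getD t (Classical.arbitrary α))

theorem Doubled.flatten_map_eq_of_instanceCode_eq [Nonempty α] (hd : Doubled V) {m : ℕ}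
    {φ₁ φ₂ : Γ → List α} (h₁ : ((V.map φ₁).flatten).length = m)
    (h₂ : ((V.map φ₂).flatten).length = m) (h : instanceCode V m φ₁ = instanceCode V m φ₂) :
    (V.map φ₁).flatten = (V.map φ₂).flatten := by
  obtain ⟨hlen, hkey⟩ := Prod.ext_iff.1 h
  have hlen' : ∀ x ∈ V, (φ₁ x).length = (φ₂ x).length := fun x hx => by
    have := congrArg Fin.val (congrFun hlen ⟨x, List.mem_toFinset.2 hx⟩)
    dsimp only [instanceCode] at this
    rwa [min_eq_left (h₁ ▸ length_le_length_flatten_map hx φ₁),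
      min_eq_left (h₂ ▸ length_le_length_flatten_map hx φ₂)] at this
  refine flatten_map_eq_of_flatten_map_dedup_eq hlen' (List.ext_getElem ?_ fun t ht₁ ht₂ => ?_)
  · simp only [List.length_flatten, List.map_map]
    congr 1
    exact List.map_congr_left fun x hx => hlen' x (List.mem_dedup.1 hx)
  · have ht : t < m / 2 := by
      have := hd.two_mul_length_flatten_map_dedup_le φ₁
      omega
    have := congrFun hkey ⟨t, ht⟩
    dsimp only [instanceCode] at this
    rwa [List.getD_eq_getElem _ _ ht₁, List.getD_eq_getElem _ _ ht₂] at this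

theorem Doubled.card_isInstance_le [Fintype α] [Nonempty α] (hd : Doubled V) (m : ℕ) :
    Nat.card {u : Fin m → α // IsInstance V (List.ofFn u)}
      ≤ (m + 1) ^ V.toFinset.card * Fintype.card α ^ (m / 2) := by
  classical
  have hinj : Function.Injective
      fun u : {u : Fin m → α // IsInstance V (List.ofFn u)} => instanceCode V m u.2.choose := by
    rintro ⟨u₁, h₁⟩ ⟨u₂, h₂⟩ h
    have e₁ := h₁.choose_spec.2
    have e₂ := h₂.choose_spec.2
    refine Subtype.ext (List.ofFn_injective ?_)
    rw [e₁, e₂]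
    exact hd.flatten_map_eq_of_instanceCode_eq (by rw [← e₁, List.length_ofFn])
      (by rw [← e₂, List.length_ofFn]) h
  refine (Nat.card_le_card_of_injective _ hinj).trans_eq ?_
  rw [Nat.card_eq_fintype_card, Fintype.card_prod, Fintype.card_fun, Fintype.card_fun,
    Fintype.card_coe, Fintype.card_fin, Fintype.card_fin]

end InstanceCount

theorem isInstance_replicate {Γ α : Type*} (V : List Γ) (a : α) :
    IsInstance V (List.replicate V.length a) :=
  ⟨fun _ => [a], fun _ _ => List.cons_ne_nil _ _, by
    rw [List.map_const', List.flatten_replicate_singleton]⟩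

theorem inv_pow_length_le_instProb {Γ : Type*} (V : List Γ) {q : ℕ} (hq : 0 < q) :
    ((q : ℝ) ^ V.length)⁻¹ ≤ instProb V q V.length := by
  have : Nonempty {u : Fin V.length → Fin q // IsInstance V (List.ofFn u)} :=
    ⟨⟨fun _ => ⟨0, hq⟩, by rw [List.ofFn_const]; exact isInstance_replicate V _⟩⟩
  rw [instProb, inv_eq_one_div]
  gcongr
  exact_mod_cast Nat.card_pos

theorem inv_pow_length_div_le_expDensity {Γ : Type*} {V : List Γ} (hV : V ≠ []) {q : ℕ}
    (hq : 0 < q) {n : ℕ} (hn : 2 * V.length ≤ n) :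
    ((q : ℝ) ^ V.length)⁻¹ / n ≤ expDensity V q n := by
  have hL : 1 ≤ V.length := List.length_pos_iff.2 hV
  have hterm : ((n + 1 - V.length : ℕ) : ℝ) * instProb V q V.length
      ≤ ∑ m ∈ Icc 1 n, ((n + 1 - m : ℕ) : ℝ) * instProb V q m :=
    single_le_sum (f := fun m => ((n + 1 - m : ℕ) : ℝ) * instProb V q m)
      (fun m _ => by rw [instProb]; positivity) (mem_Icc.2 ⟨hL, by omega⟩)
  have hfac : ((n : ℝ) + 1) / 2 ≤ ((n + 1 - V.length : ℕ) : ℝ) := by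
    have : 2 * (V.length : ℝ) ≤ n := by exact_mod_cast hn
    rw [Nat.cast_sub (by omega)]
    push_cast
    linarith
  have hp := inv_pow_length_le_instProb V hq
  have hn₀ : (0 : ℝ) < n := by exact_mod_cast (show 0 < n by omega)
  rw [expDensity_eq_sum_instProb V hq, div_le_div_iff₀ hn₀ (by positivity)]
  have hinv : 0 ≤ ((q : ℝ) ^ V.length)⁻¹ := by positivity
  nlinarith [mul_le_mul hfac hp hinv (by positivity)]

theorem Doubled.instProb_le {Γ : Type*} [DecidableEq Γ] {V : List Γ} (hd : Doubled V) {q : ℕ}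
    (hq : 0 < q) (m : ℕ) :
    instProb V q m ≤ ((m : ℝ) + 1) ^ V.toFinset.card * (√q)⁻¹ ^ m := by
  have : Nonempty (Fin q) := ⟨⟨0, hq⟩⟩
  have hcard := hd.card_isInstance_le (α := Fin q) m
  rw [Fintype.card_fin] at hcard
  have hs : 1 ≤ √(q : ℝ) := Real.one_le_sqrt.2 (by exact_mod_cast hq)
  have hpow : ((q : ℝ) ^ (m / 2)) * √q ^ m ≤ (q : ℝ) ^ m := by
    have hsq : ∀ j, (q : ℝ) ^ j = √q ^ (2 * j) := fun j => by
      rw [pow_mul, Real.sq_sqrt (Nat.cast_nonneg q)]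
    rw [hsq, hsq, ← pow_add]
    exact pow_le_pow_right₀ hs (by omega)
  rw [instProb, div_le_iff₀ (by positivity), inv_pow, mul_assoc]
  calc (Nat.card _ : ℝ) ≤ ((m : ℝ) + 1) ^ V.toFinset.card * (q : ℝ) ^ (m / 2) := by
        exact_mod_cast hcard
    _ ≤ _ := by
      gcongr
      rw [le_inv_mul_iff₀ (by positivity)]
      linarith

theorem summable_add_one_pow_mul_geometric (k : ℕ) {r : ℝ} (hr₀ : 0 < r) (hr₁ : r < 1) :
    Summable fun m : ℕ => ((m : ℝ) + 1) ^ k * r ^ m := by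
  have hshift := (summable_nat_add_iff (f := fun m : ℕ => (m : ℝ) ^ k * r ^ m) 1).2
    (summable_pow_mul_geometric_of_norm_lt_one k (by rwa [Real.norm_of_nonneg hr₀.le]))
  refine (hshift.mul_left r⁻¹).congr fun m => ?_
  rw [Nat.cast_add_one, pow_succ]
  field_simp

theorem Doubled.exists_expDensity_le {Γ : Type*} [DecidableEq Γ] {V : List Γ} (hd : Doubled V)
    {q : ℕ} (hq : 2 ≤ q) : ∃ C > 0, ∀ n : ℕ, expDensity V q n ≤ C / n := by
  set f : ℕ → ℝ := fun m => ((m : ℝ) + 1) ^ V.toFinset.card * (√q)⁻¹ ^ m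
  have hs : 1 < √(q : ℝ) := Real.lt_sqrt_of_sq_lt (by norm_num; exact_mod_cast hq)
  have hf : Summable f :=
    summable_add_one_pow_mul_geometric _ (by positivity) (inv_lt_one_of_one_lt₀ hs)
  have hf₀ : ∀ m, 0 ≤ f m := fun m => by positivity
  have hS : 0 < ∑' m, f m := hf.tsum_pos hf₀ 0 (by simp [f])
  refine ⟨2 * ∑' m, f m, by positivity, fun n => ?_⟩
  rcases n.eq_zero_or_pos with rfl | hn
  · simp [expDensity_eq_sum_instProb V (by omega : 0 < q)]
  have hsum : ∑ m ∈ Icc 1 n, ((n + 1 - m : ℕ) : ℝ) * instProb V q m ≤ (n + 1) * ∑' m, f m :=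
    calc ∑ m ∈ Icc 1 n, ((n + 1 - m : ℕ) : ℝ) * instProb V q m
        ≤ ∑ m ∈ Icc 1 n, ((n : ℝ) + 1) * f m := by
          refine sum_le_sum fun m _ => mul_le_mul ?_ (hd.instProb_le (by omega) m)
            (by rw [instProb]; positivity) (by positivity)
          exact_mod_cast Nat.sub_le _ _
      _ ≤ (n + 1) * ∑' m, f m := by
          rw [← mul_sum]
          gcongr
          exact hf.sum_le_tsum _ fun m _ => hf₀ m
  rw [expDensity_eq_sum_instProb V (by omega), div_le_div_iff₀ (by positivity) (by positivity)]
  nlinarith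

theorem stmt17 {Γ : Type*} [DecidableEq Γ] (V : List Γ) (hV : V ≠ []) (hd : Doubled V)
    (q : ℕ) (hq : 2 ≤ q) :
    ∃ c C : ℝ, 0 < c ∧ 0 < C ∧ ∃ N : ℕ, ∀ n : ℕ, N ≤ n →
      c / n ≤ expDensity V q n ∧ expDensity V q n ≤ C * Real.log n / n := by
  obtain ⟨C, hC, hupper⟩ := hd.exists_expDensity_le hq
  refine ⟨((q : ℝ) ^ V.length)⁻¹, C, by positivity, hC, max (2 * V.length) 3, fun n hn => ?_⟩
  refine ⟨inv_pow_length_div_le_expDensity hV (by omega) (le_of_max_le_left hn), ?_⟩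
  have hn₃ : (3 : ℝ) ≤ n := by exact_mod_cast le_of_max_le_right hn
  have hlog : 1 ≤ Real.log n := by
    rw [Real.le_log_iff_exp_le (by linarith)]
    exact Real.exp_one_lt_three.le.trans hn₃
  calc expDensity V q n ≤ C / n := hupper n
    _ ≤ C * Real.log n / n := by gcongr; exact le_mul_of_one_le_right hC.le hlog
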